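/- arXiv:1407.1594 — 8 statements merged into one kernel-verified Lean document; each statement's English description precedes it below -/
import Mathlib

section
/- Let T > 0 and let Ω be a nonempty bounded subset of ℝ². Let X̄ : ℝ → ℝ → ℝ² → ℝ² be jointly continuous on [0,T] × [0,T] × ℝ². Assume the exit condition: for every x in the closure of Ω there exists t ∈ (0,T) such that X̄(t,0,x) does not belong to the closure of Ω. Then there exist ε > 0, T₀* > 0 and T₁* > 0 such that for every T₀ ∈ (0,T₀*), every T₁ ∈ (0,T₁*) and every x in the closure of Ω, there exists t ∈ [T₀, T − 2T₁] with infDist(X̄(t,T₀,x), Ω) ≥ 2ε. -/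
/-!
Each point `x` of the compact set `closure Ω` leaves `closure Ω` at some time `t ∈ (0, T)`, so
`infDist (X̄ t 0 x) Ω > 0`. By continuity the same time `t` still gives a definite distance from `Ω`
when the flow is started at a small time `T₀` from a point near `x`, and compactness of
`closure Ω` makes `ε` and the smallness thresholds for `T₀`, `T₁` uniform.
-/

open Filter Topology Set Metric

section

variable {F E : Type*} [TopologicalSpace F] [PseudoMetricSpace E]

/-- Here `p = ((ε, T₀, T₁), y)`, with the three parameters tending to `0⁺` and `y` to `x`. -/
theorem eventually_exists_mem_Icc_le_infDist {T t : ℝ} (ht : t ∈ Ioo 0 T) {Ω : Set E}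
    {Xbar : ℝ → ℝ → F → E} {x : F}
    (hcont : ContinuousWithinAt (fun p : ℝ × ℝ × F => Xbar p.1 p.2.1 p.2.2)
      (Icc 0 T ×ˢ Icc 0 T ×ˢ univ) (t, 0, x))
    (hpos : 0 < infDist (Xbar t 0 x) Ω) :
    ∀ᶠ p : (ℝ × ℝ × ℝ) × F in (𝓝[>] 0 ×ˢ 𝓝[>] 0 ×ˢ 𝓝[>] 0) ×ˢ 𝓝 x,
      ∃ s ∈ Icc p.1.2.1 (T - 2 * p.1.2.2), 2 * p.1.1 ≤ infDist (Xbar s p.1.2.1 p.2) Ω := by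
  set c := infDist (Xbar t 0 x) Ω
  have hT₀ : Tendsto (fun p : (ℝ × ℝ × ℝ) × F => p.1.2.1)
      ((𝓝[>] 0 ×ˢ 𝓝[>] 0 ×ˢ 𝓝[>] 0) ×ˢ 𝓝 x) (𝓝[>] 0) :=
    tendsto_fst.comp (tendsto_snd.comp tendsto_fst)
  have hflow : Tendsto (fun p : (ℝ × ℝ × ℝ) × F => (t, p.1.2.1, p.2))
      ((𝓝[>] 0 ×ˢ 𝓝[>] 0 ×ˢ 𝓝[>] 0) ×ˢ 𝓝 x) (𝓝[Icc 0 T ×ˢ Icc 0 T ×ˢ univ] (t, 0, x)) := by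
    refine tendsto_nhdsWithin_iff.2 ⟨?_, ?_⟩
    · exact tendsto_const_nhds.prodMk_nhds
        ((hT₀.mono_right nhdsWithin_le_nhds).prodMk_nhds tendsto_snd)
    · filter_upwards [hT₀ self_mem_nhdsWithin,
        hT₀.mono_right nhdsWithin_le_nhds (gt_mem_nhds ht.1)] with p hp hpt
      exact ⟨⟨ht.1.le, ht.2.le⟩, ⟨le_of_lt hp, (le_of_lt hpt).trans ht.2.le⟩, mem_univ _⟩
  have hdist : Tendsto (fun p : (ℝ × ℝ × ℝ) × F => infDist (Xbar t p.1.2.1 p.2) Ω)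
      ((𝓝[>] 0 ×ˢ 𝓝[>] 0 ×ˢ 𝓝[>] 0) ×ˢ 𝓝 x) (𝓝 c) :=
    ((continuous_infDist_pt Ω).tendsto _).comp (hcont.tendsto.comp hflow)
  have hsmall : ∀ {a : ℝ}, 0 < a → ∀ᶠ r in 𝓝[>] (0 : ℝ), r < a := fun ha =>
    nhdsWithin_le_nhds (gt_mem_nhds ha)
  filter_upwards [hdist.eventually (lt_mem_nhds (half_lt_self hpos)),
    ((hsmall (by positivity : 0 < c / 4)).prod_inl _).prod_inl _,
    hT₀.eventually (hsmall ht.1),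
    ((((hsmall (by linarith [ht.2] : 0 < (T - t) / 2)).prod_inr _).prod_inr _).prod_inl _)]
    with p hfar hε hp₀ hp₁
  exact ⟨t, ⟨hp₀.le, by linarith⟩, by linarith⟩

theorem eventually_forall_exists_mem_Icc_le_infDist {T : ℝ} {K : Set F} (hK : IsCompact K)
    {Ω : Set E} {Xbar : ℝ → ℝ → F → E}
    (hcont : ContinuousOn (fun p : ℝ × ℝ × F => Xbar p.1 p.2.1 p.2.2)
      (Icc 0 T ×ˢ Icc 0 T ×ˢ univ))
    (hexit : ∀ x ∈ K, ∃ t ∈ Ioo 0 T, 0 < infDist (Xbar t 0 x) Ω) :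
    ∀ᶠ q : ℝ × ℝ × ℝ in 𝓝[>] 0 ×ˢ 𝓝[>] 0 ×ˢ 𝓝[>] 0, ∀ x ∈ K,
      ∃ s ∈ Icc q.2.1 (T - 2 * q.2.2), 2 * q.1 ≤ infDist (Xbar s q.2.1 x) Ω := by
  have hlocal : ∀ x ∈ K, ∀ᶠ p : (ℝ × ℝ × ℝ) × F in (𝓝[>] 0 ×ˢ 𝓝[>] 0 ×ˢ 𝓝[>] 0) ×ˢ 𝓝 x,
      ∃ s ∈ Icc p.1.2.1 (T - 2 * p.1.2.2), 2 * p.1.1 ≤ infDist (Xbar s p.1.2.1 p.2) Ω := by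
    intro x hx
    obtain ⟨t, ht, hpos⟩ := hexit x hx
    exact eventually_exists_mem_Icc_le_infDist ht
      (hcont _ ⟨⟨ht.1.le, ht.2.le⟩, ⟨le_rfl, ht.1.le.trans ht.2.le⟩, mem_univ x⟩) hpos
  exact (Eventually.curry (hK.mem_prod_nhdsSet_of_forall hlocal)).mono
    fun _ h => h.self_of_nhdsSet

end

theorem exists_pos_forall_Ioo_of_eventually {P : ℝ → ℝ → ℝ → Prop}
    (h : ∀ᶠ q : ℝ × ℝ × ℝ in 𝓝[>] 0 ×ˢ 𝓝[>] 0 ×ˢ 𝓝[>] 0, P q.1 q.2.1 q.2.2) :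
    ∃ ε > (0 : ℝ), ∃ a > (0 : ℝ), ∃ b > (0 : ℝ), ∀ T₀ ∈ Ioo 0 a, ∀ T₁ ∈ Ioo 0 b, P ε T₀ T₁ := by
  obtain ⟨pε, hpε, p', hp', hP⟩ := eventually_prod_iff.1 h
  obtain ⟨p₀, hp₀, p₁, hp₁, hP'⟩ := eventually_prod_iff.1 hp'
  obtain ⟨ε, hε, hεpos⟩ := (hpε.and self_mem_nhdsWithin).exists
  obtain ⟨a, ha, hIoo₀⟩ := mem_nhdsGT_iff_exists_Ioo_subset.1 hp₀
  obtain ⟨b, hb, hIoo₁⟩ := mem_nhdsGT_iff_exists_Ioo_subset.1 hp₁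
  exact ⟨ε, hεpos, a, ha, b, hb, fun T₀ h₀ T₁ h₁ => hP hε (hP' (hIoo₀ h₀) (hIoo₁ h₁))⟩

theorem stmt_0_general
    (T : ℝ)
    (Ω : Set (EuclideanSpace ℝ (Fin 2))) (hne : Ω.Nonempty) (hbdd : Bornology.IsBounded Ω)
    (Xbar : ℝ → ℝ → EuclideanSpace ℝ (Fin 2) → EuclideanSpace ℝ (Fin 2))
    (hcont : ContinuousOn (fun p : ℝ × ℝ × EuclideanSpace ℝ (Fin 2) => Xbar p.1 p.2.1 p.2.2)
      (Set.Icc 0 T ×ˢ Set.Icc 0 T ×ˢ Set.univ))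
    (hexit : ∀ x ∈ closure Ω, ∃ t ∈ Set.Ioo 0 T, Xbar t 0 x ∉ closure Ω) :
    ∃ ε > (0:ℝ), ∃ T₀star > (0:ℝ), ∃ T₁star > (0:ℝ),
      ∀ T₀ ∈ Set.Ioo 0 T₀star, ∀ T₁ ∈ Set.Ioo 0 T₁star, ∀ x ∈ closure Ω,
        ∃ t ∈ Set.Icc T₀ (T - 2*T₁), 2*ε ≤ Metric.infDist (Xbar t T₀ x) Ω := by
  have hexit' : ∀ x ∈ closure Ω, ∃ t ∈ Ioo 0 T, 0 < infDist (Xbar t 0 x) Ω := fun x hx =>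
    (hexit x hx).imp fun _ ⟨ht, hout⟩ => ⟨ht, (infDist_pos_iff_notMem_closure hne).1 hout⟩
  exact exists_pos_forall_Ioo_of_eventually
    (eventually_forall_exists_mem_Icc_le_infDist hbdd.isCompact_closure hcont hexit')

/-- Lemma 3.1 of the paper: if every point of `closure Ω` exits `closure Ω` under the
continuous flow `Xbar` in time `< T`, then there are `ε, T₀*, T₁* > 0` such that every point
of `closure Ω`, flowed from time `T₀`, is at distance at least `2ε` from `Ω` at some time
`t ∈ [T₀, T - 2T₁]`. -/
theorem stmt_0
    (T : ℝ) (hT : 0 < T)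
    (Ω : Set (EuclideanSpace ℝ (Fin 2))) (hne : Ω.Nonempty) (hbdd : Bornology.IsBounded Ω)
    (Xbar : ℝ → ℝ → EuclideanSpace ℝ (Fin 2) → EuclideanSpace ℝ (Fin 2))
    (hcont : ContinuousOn (fun p : ℝ × ℝ × EuclideanSpace ℝ (Fin 2) => Xbar p.1 p.2.1 p.2.2)
      (Set.Icc 0 T ×ˢ Set.Icc 0 T ×ˢ Set.univ))
    (hexit : ∀ x ∈ closure Ω, ∃ t ∈ Set.Ioo 0 T, Xbar t 0 x ∉ closure Ω) :
    ∃ ε > (0:ℝ), ∃ T₀star > (0:ℝ), ∃ T₁star > (0:ℝ),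
      ∀ T₀ ∈ Set.Ioo 0 T₀star, ∀ T₁ ∈ Set.Ioo 0 T₁star, ∀ x ∈ closure Ω,
        ∃ t ∈ Set.Icc T₀ (T - 2*T₁), 2*ε ≤ Metric.infDist (Xbar t T₀ x) Ω :=
  stmt_0_general T Ω hne hbdd Xbar hcont hexit
end

section
/- Let T > 0, L ≥ 0, ε > 0, T₀* > 0, T₁* > 0, let Ω be a nonempty bounded subset of ℝ², and assume: (i) for every t ∈ [0,T] the map ȳ(t,·) : ℝ² → ℝ² is L-Lipschitz; (ii) X̄ and X̂ are flows of ȳ and of ȳ + û in integral form; (iii) there is a measurable g : ℝ → [0,∞) with |û(t,x)| ≤ g(t) for all t ∈ [0,T], x ∈ ℝ², and (∫₀ᵀ g(t)² dt)^{1/2} ≤ T^{−1/2} e^{−LT} ε; (iv) for every T₀ ∈ (0,T₀*), T₁ ∈ (0,T₁*) and x in the closure of Ω there exists t ∈ [T₀, T − 2T₁] with infDist(X̄(t,T₀,x), Ω) ≥ 2ε. Then for every T₀ ∈ (0,T₀*), every T₁ ∈ (0,T₁*) and every x in the closure of Ω, there exists t ∈ [T₀, T − 2T₁] with infDist(X̂(t,T₀,x),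 Ω) ≥ ε. -/
/-!
Started from the same point at time `T₀`, the two flows satisfy
`‖X̂ - X̄‖(s) ≤ L ∫_{T₀}^s ‖X̂ - X̄‖ + ∫_{T₀}^T g`, so by Grönwall they stay within
`(∫_{T₀}^T g) e^{LT}` of each other on `[T₀, T]`. Cauchy–Schwarz bounds `∫_{T₀}^T g` by
`√T ‖g‖_{L²(0,T)} ≤ e^{-LT} ε`, so the flows are `ε`-close. As `infDist (·) Ω` is 1-Lipschitz,
a time at which `X̄` is `2ε` away from `Ω` is a time at which `X̂` is `ε` away from it.
-/

open MeasureTheory Set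

section SquareIntegrable

variable {g : ℝ → ℝ} {a b : ℝ}

lemma memLp_two_restrict_Ioc_of_intervalIntegrable_sq (hg : AEStronglyMeasurable g)
    (hg2 : IntervalIntegrable (fun t => g t ^ 2) volume a b) :
    MemLp g 2 (volume.restrict (Ioc a b)) :=
  (memLp_two_iff_integrable_sq hg.restrict).2 hg2.1

lemma IntervalIntegrable.of_sq (hg : AEStronglyMeasurable g)
    (hg2 : IntervalIntegrable (fun t => g t ^ 2) volume a b) (hab : a ≤ b) :
    IntervalIntegrable g volume a b :=
  (intervalIntegrable_iff_integrableOn_Ioc_of_le hab).2 <|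
    (memLp_two_restrict_Ioc_of_intervalIntegrable_sq hg hg2).integrable one_le_two

theorem intervalIntegral_le_sqrt_mul_sqrt_integral_sq (hg : AEStronglyMeasurable g)
    (hg2 : IntervalIntegrable (fun t => g t ^ 2) volume a b) (hab : a ≤ b) :
    ∫ t in a..b, g t ≤ √(b - a) * √(∫ t in a..b, g t ^ 2) := by
  have hL2 := memLp_two_restrict_Ioc_of_intervalIntegrable_sq hg hg2
  have h2 : ENNReal.ofReal 2 = 2 := by norm_num
  have hholder := integral_mul_le_Lp_mul_Lq_of_nonneg (μ := volume.restrict (Ioc a b))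
    Real.HolderConjugate.two_two (.of_forall fun _ => zero_le_one)
    (.of_forall fun t => abs_nonneg (g t))
    (h2 ▸ memLp_const 1) (h2 ▸ hL2.abs)
  simp only [one_mul, one_pow, mul_one, Real.rpow_two, sq_abs, integral_const, smul_eq_mul,
    measureReal_restrict_apply_univ, Real.volume_real_Ioc_of_le hab] at hholder
  rw [intervalIntegral.integral_of_le hab, intervalIntegral.integral_of_le hab,
    Real.sqrt_eq_rpow, Real.sqrt_eq_rpow]
  have hL1 := hL2.integrable one_le_two
  exact (integral_mono hL1 hL1.abs fun t => le_abs_self (g t)).trans hholder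

theorem intervalIntegral_le_of_sqrt_integral_sq_le {T₀ T c : ℝ} (hT : 0 < T) (hT₀ : 0 ≤ T₀)
    (hT₀T : T₀ ≤ T) (hg : AEStronglyMeasurable g)
    (hg2 : IntervalIntegrable (fun t => g t ^ 2) volume 0 T)
    (hsmall : √(∫ t in (0:ℝ)..T, g t ^ 2) ≤ (√T)⁻¹ * c) :
    ∫ t in T₀..T, g t ≤ c := by
  have hsub : uIcc T₀ T ⊆ uIcc 0 T := uIcc_subset_uIcc_right (Icc_subset_uIcc ⟨hT₀, hT₀T⟩)
  calc ∫ t in T₀..T, g t ≤ √(T - T₀) * √(∫ t in T₀..T, g t ^ 2) :=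
        intervalIntegral_le_sqrt_mul_sqrt_integral_sq hg (hg2.mono_set hsub) hT₀T
    _ ≤ √T * √(∫ t in (0:ℝ)..T, g t ^ 2) := by
        gcongr
        · linarith
        · exact intervalIntegral.integral_mono_interval hT₀ hT₀T le_rfl
            (ae_of_all _ fun t => sq_nonneg (g t)) hg2
    _ ≤ √T * ((√T)⁻¹ * c) := by gcongr
    _ = c := by
        have : √T ≠ 0 := by positivity
        field_simp

end SquareIntegrable

lemma mul_gronwallBound_zero_add (K δ x : ℝ) :
    K * gronwallBound 0 K δ x + δ = δ * Real.exp (K * x) := by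
  rcases eq_or_ne K 0 with rfl | hK
  · simp [gronwallBound_K0]
  · rw [gronwallBound_of_K_ne_0 hK]
    field_simp
    ring

theorem ContinuousOn.hasDerivWithinAt_integral_Ici {φ : ℝ → ℝ} {a b s : ℝ}
    (hφ : ContinuousOn φ (Icc a b)) (hs : s ∈ Ico a b) :
    HasDerivWithinAt (fun u => ∫ r in a..u, φ r) (φ s) (Ici s) s := by
  have hnhds : Icc a b ∈ nhdsWithin s (Ioi s) :=
    mem_nhdsWithin.2 ⟨Iio b, isOpen_Iio, hs.2, fun r hr => ⟨hs.1.trans hr.2.le, hr.1.le⟩⟩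
  exact intervalIntegral.integral_hasDerivWithinAt_right
    ((hφ.mono (Icc_subset_Icc_right hs.2.le)).intervalIntegrable_of_Icc hs.1)
    ⟨_, hnhds, hφ.aestronglyMeasurable measurableSet_Icc⟩
    ((hφ s (Ico_subset_Icc_self hs)).mono_of_mem_nhdsWithin hnhds)

theorem le_mul_exp_of_le_mul_integral_add {φ : ℝ → ℝ} {a b K δ : ℝ} (hK : 0 ≤ K)
    (hφ : ContinuousOn φ (Icc a b))
    (h : ∀ s ∈ Icc a b, φ s ≤ K * (∫ r in a..s, φ r) + δ) :
    ∀ s ∈ Icc a b, φ s ≤ δ * Real.exp (K * (s - a)) := by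
  have hψ : ContinuousOn (fun u => ∫ r in a..u, φ r) (Icc a b) := by
    rcases le_or_gt a b with hab | hab
    · simpa [uIcc_of_le hab] using intervalIntegral.continuousOn_primitive_interval
        (hφ.integrableOn_Icc.mono_set (uIcc_of_le hab).subset)
    · simp [Icc_eq_empty_of_lt hab]
  have hgron := le_gronwallBound_of_liminf_deriv_right_le (δ := 0) hψ
    (fun s hs _ hr => (hφ.hasDerivWithinAt_integral_Ici hs).liminf_right_slope_le hr)
    (by simp) fun s hs => h s (Ico_subset_Icc_self hs)
  intro s hs
  calc φ s ≤ K * (∫ r in a..s, φ r) + δ := h s hs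
    _ ≤ K * gronwallBound 0 K δ (s - a) + δ := by gcongr; exact hgron s hs
    _ = δ * Real.exp (K * (s - a)) := mul_gronwallBound_zero_add K δ (s - a)

section Perturbation

variable {E : Type*} [NormedAddCommGroup E] [NormedSpace ℝ E]
  {f u : ℝ → E → E} {X Y : ℝ → E} {g : ℝ → ℝ} {x : E} {a b L : ℝ}

theorem norm_sub_le_mul_integral_add_of_integral_eq
    (hlip : ∀ r ∈ Icc a b, ∀ y y', ‖f r y - f r y'‖ ≤ L * ‖y - y'‖)
    (hu : ∀ r ∈ Icc a b, ∀ y, ‖u r y‖ ≤ g r) (hg : IntervalIntegrable g volume a b)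
    (hX : ContinuousOn X (Icc a b)) (hY : ContinuousOn Y (Icc a b))
    (hXi : IntervalIntegrable (fun r => f r (X r)) volume a b)
    (hYi : IntervalIntegrable (fun r => f r (Y r) + u r (Y r)) volume a b)
    (hXeq : ∀ s ∈ Icc a b, X s = x + ∫ r in a..s, f r (X r))
    (hYeq : ∀ s ∈ Icc a b, Y s = x + ∫ r in a..s, (f r (Y r) + u r (Y r))) :
    ∀ s ∈ Icc a b, ‖Y s - X s‖ ≤ L * (∫ r in a..s, ‖Y r - X r‖) + ∫ r in a..b, g r := by
  intro s hs
  have hsub : uIcc a s ⊆ uIcc a b := uIcc_subset_uIcc_left (Icc_subset_uIcc hs)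
  have hg0 : ∀ r ∈ Icc a b, 0 ≤ g r := fun r hr => (norm_nonneg _).trans (hu r hr x)
  have hdiff : Y s - X s = ∫ r in a..s, (f r (Y r) + u r (Y r) - f r (X r)) := by
    rw [hYeq s hs, hXeq s hs,
      intervalIntegral.integral_sub (hYi.mono_set hsub) (hXi.mono_set hsub)]
    abel
  have hφ : IntervalIntegrable (fun r => ‖Y r - X r‖) volume a s :=
    ((hY.sub hX).norm.mono (Icc_subset_Icc_right hs.2)).intervalIntegrable_of_Icc hs.1
  have hpointwise :
      ∀ r ∈ Ioc a s, ‖f r (Y r) + u r (Y r) - f r (X r)‖ ≤ L * ‖Y r - X r‖ + g r := by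
    intro r hr
    have hr' : r ∈ Icc a b := ⟨hr.1.le, hr.2.trans hs.2⟩
    calc ‖f r (Y r) + u r (Y r) - f r (X r)‖ = ‖(f r (Y r) - f r (X r)) + u r (Y r)‖ := by
          rw [add_sub_right_comm]
      _ ≤ L * ‖Y r - X r‖ + g r :=
          (norm_add_le _ _).trans (add_le_add (hlip r hr' _ _) (hu r hr' _))
  calc ‖Y s - X s‖ ≤ ∫ r in a..s, (L * ‖Y r - X r‖ + g r) := by
        rw [hdiff]
        exact intervalIntegral.norm_integral_le_of_norm_le hs.1
          (ae_of_all _ hpointwise) ((hφ.const_mul L).add (hg.mono_set hsub))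
    _ = L * (∫ r in a..s, ‖Y r - X r‖) + ∫ r in a..s, g r := by
        rw [intervalIntegral.integral_add (hφ.const_mul L) (hg.mono_set hsub),
          intervalIntegral.integral_const_mul]
    _ ≤ L * (∫ r in a..s, ‖Y r - X r‖) + ∫ r in a..b, g r := by
        gcongr
        exact intervalIntegral.integral_mono_interval le_rfl hs.1 hs.2
          ((ae_restrict_iff' measurableSet_Ioc).2 (ae_of_all _ fun r hr =>
            hg0 r (Ioc_subset_Icc_self hr))) hg

theorem norm_sub_le_integral_mul_exp_of_integral_eq (hL : 0 ≤ L)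
    (hlip : ∀ r ∈ Icc a b, ∀ y y', ‖f r y - f r y'‖ ≤ L * ‖y - y'‖)
    (hu : ∀ r ∈ Icc a b, ∀ y, ‖u r y‖ ≤ g r) (hg : IntervalIntegrable g volume a b)
    (hX : ContinuousOn X (Icc a b)) (hY : ContinuousOn Y (Icc a b))
    (hXi : IntervalIntegrable (fun r => f r (X r)) volume a b)
    (hYi : IntervalIntegrable (fun r => f r (Y r) + u r (Y r)) volume a b)
    (hXeq : ∀ s ∈ Icc a b, X s = x + ∫ r in a..s, f r (X r))
    (hYeq : ∀ s ∈ Icc a b, Y s = x + ∫ r in a..s, (f r (Y r) + u r (Y r))) :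
    ∀ s ∈ Icc a b, ‖Y s - X s‖ ≤ (∫ r in a..b, g r) * Real.exp (L * (b - a)) := by
  intro s hs
  have hG : 0 ≤ ∫ r in a..b, g r := intervalIntegral.integral_nonneg (hs.1.trans hs.2)
    fun r hr => (norm_nonneg _).trans (hu r hr x)
  calc ‖Y s - X s‖ ≤ (∫ r in a..b, g r) * Real.exp (L * (s - a)) :=
        le_mul_exp_of_le_mul_integral_add hL (hY.sub hX).norm
          (norm_sub_le_mul_integral_add_of_integral_eq hlip hu hg hX hY hXi hYi hXeq hYeq) s hs
    _ ≤ (∫ r in a..b, g r) * Real.exp (L * (b - a)) := by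
        gcongr
        exact hs.2

end Perturbation

theorem stmt_1_general
    (T L ε T₀star T₁star : ℝ)
    (hT : 0 < T) (hL : 0 ≤ L) (hε : 0 < ε)
    (Ω : Set (EuclideanSpace ℝ (Fin 2)))
    (ybar uhat : ℝ → EuclideanSpace ℝ (Fin 2) → EuclideanSpace ℝ (Fin 2))
    (Xbar Xhat : ℝ → ℝ → EuclideanSpace ℝ (Fin 2) → EuclideanSpace ℝ (Fin 2))
    (hlip : ∀ t ∈ Set.Icc (0:ℝ) T, ∀ x x', ‖ybar t x - ybar t x'‖ ≤ L * ‖x - x'‖)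
    (hXbar_cont : ∀ τ ∈ Set.Icc (0:ℝ) T, ∀ x, ContinuousOn (fun r => Xbar r τ x) (Set.Icc 0 T))
    (hXhat_cont : ∀ τ ∈ Set.Icc (0:ℝ) T, ∀ x, ContinuousOn (fun r => Xhat r τ x) (Set.Icc 0 T))
    (hXbar_intble : ∀ τ t : ℝ, 0 ≤ τ → τ ≤ t → t ≤ T → ∀ x,
      IntervalIntegrable (fun r => ybar r (Xbar r τ x)) volume τ t)
    (hXhat_intble : ∀ τ t : ℝ, 0 ≤ τ → τ ≤ t → t ≤ T → ∀ x,
      IntervalIntegrable (fun r => ybar r (Xhat r τ x) + uhat r (Xhat r τ x)) volume τ t)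
    (hXbar_eq : ∀ τ t : ℝ, 0 ≤ τ → τ ≤ t → t ≤ T → ∀ x,
      Xbar t τ x = x + ∫ r in τ..t, ybar r (Xbar r τ x))
    (hXhat_eq : ∀ τ t : ℝ, 0 ≤ τ → τ ≤ t → t ≤ T → ∀ x,
      Xhat t τ x = x + ∫ r in τ..t, (ybar r (Xhat r τ x) + uhat r (Xhat r τ x)))
    (g : ℝ → ℝ) (hg_meas : Measurable g)
    (hg_int : IntervalIntegrable (fun t => (g t)^2) volume 0 T)
    (hu_bound : ∀ t ∈ Set.Icc (0:ℝ) T, ∀ x, ‖uhat t x‖ ≤ g t)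
    (hg_small : Real.sqrt (∫ t in (0:ℝ)..T, (g t)^2) ≤ (Real.sqrt T)⁻¹ * Real.exp (-(L*T)) * ε)
    (hXbar_exit : ∀ T₀ ∈ Set.Ioo 0 T₀star, ∀ T₁ ∈ Set.Ioo 0 T₁star, ∀ x ∈ closure Ω,
      ∃ t ∈ Set.Icc T₀ (T - 2*T₁), 2*ε ≤ Metric.infDist (Xbar t T₀ x) Ω) :
    ∀ T₀ ∈ Set.Ioo 0 T₀star, ∀ T₁ ∈ Set.Ioo 0 T₁star, ∀ x ∈ closure Ω,
      ∃ t ∈ Set.Icc T₀ (T - 2*T₁), ε ≤ Metric.infDist (Xhat t T₀ x) Ω := by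
  intro T₀ hT₀ T₁ hT₁ x hx
  obtain ⟨t, ht, hexit⟩ := hXbar_exit T₀ hT₀ T₁ hT₁ x hx
  have htT : t ≤ T := by linarith [ht.2, hT₁.1]
  have hT₀T : T₀ ≤ T := ht.1.trans htT
  have hT₀mem : T₀ ∈ Icc 0 T := ⟨hT₀.1.le, hT₀T⟩
  have hIcc : Icc T₀ T ⊆ Icc 0 T := Icc_subset_Icc_left hT₀.1.le
  have hg_int' : IntervalIntegrable g volume T₀ T := .of_sq hg_meas.aestronglyMeasurable
    (hg_int.mono_set (uIcc_subset_uIcc_right (Icc_subset_uIcc hT₀mem))) hT₀T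
  have hG : ∫ r in T₀..T, g r ≤ Real.exp (-(L * T)) * ε :=
    intervalIntegral_le_of_sqrt_integral_sq_le hT hT₀.1.le hT₀T hg_meas.aestronglyMeasurable
      hg_int (by rwa [mul_assoc] at hg_small)
  have hclose : ‖Xhat t T₀ x - Xbar t T₀ x‖ ≤ ε := calc
    _ ≤ (∫ r in T₀..T, g r) * Real.exp (L * (T - T₀)) :=
        norm_sub_le_integral_mul_exp_of_integral_eq hL (fun r hr => hlip r (hIcc hr))
          (fun r hr => hu_bound r (hIcc hr)) hg_int'
          ((hXbar_cont T₀ hT₀mem x).mono hIcc) ((hXhat_cont T₀ hT₀mem x).mono hIcc)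
          (hXbar_intble T₀ T hT₀.1.le hT₀T le_rfl x) (hXhat_intble T₀ T hT₀.1.le hT₀T le_rfl x)
          (fun s hs => hXbar_eq T₀ s hT₀.1.le hs.1 hs.2 x)
          (fun s hs => hXhat_eq T₀ s hT₀.1.le hs.1 hs.2 x) t ⟨ht.1, htT⟩
    _ ≤ Real.exp (-(L * T)) * ε * Real.exp (L * (T - T₀)) := by gcongr
    _ = ε * Real.exp (-(L * T₀)) := by rw [mul_right_comm, ← Real.exp_add]; ring_nf
    _ ≤ ε := mul_le_of_le_one_right hε.le (Real.exp_le_one_iff.2 (by nlinarith [hT₀.1]))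
  refine ⟨t, ht, ?_⟩
  have htriangle :=
    Metric.infDist_le_infDist_add_dist (x := Xbar t T₀ x) (y := Xhat t T₀ x) (s := Ω)
  rw [dist_comm, dist_eq_norm] at htriangle
  linarith

/-- Lemma 3.2 of the paper: if the exit property holds for the flow `Xbar` of `ybar`
(with margin `2ε`), and `uhat` is small in `L²(0,T; L∞)` (bounded by `g` with
`‖g‖_{L²(0,T)} ≤ T^{-1/2} e^{-LT} ε = 2ς`), then the exit property holds for the flow
`Xhat` of `ybar + uhat` with margin `ε`. -/
theorem stmt_1
    (T L ε T₀star T₁star : ℝ)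
    (hT : 0 < T) (hL : 0 ≤ L) (hε : 0 < ε) (hT₀star : 0 < T₀star) (hT₁star : 0 < T₁star)
    (Ω : Set (EuclideanSpace ℝ (Fin 2))) (hne : Ω.Nonempty) (hbdd : Bornology.IsBounded Ω)
    (ybar uhat : ℝ → EuclideanSpace ℝ (Fin 2) → EuclideanSpace ℝ (Fin 2))
    (Xbar Xhat : ℝ → ℝ → EuclideanSpace ℝ (Fin 2) → EuclideanSpace ℝ (Fin 2))
    (hlip : ∀ t ∈ Set.Icc (0:ℝ) T, ∀ x x', ‖ybar t x - ybar t x'‖ ≤ L * ‖x - x'‖)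
    (hXbar_cont : ∀ τ ∈ Set.Icc (0:ℝ) T, ∀ x, ContinuousOn (fun r => Xbar r τ x) (Set.Icc 0 T))
    (hXhat_cont : ∀ τ ∈ Set.Icc (0:ℝ) T, ∀ x, ContinuousOn (fun r => Xhat r τ x) (Set.Icc 0 T))
    (hXbar_intble : ∀ τ t : ℝ, 0 ≤ τ → τ ≤ t → t ≤ T → ∀ x,
      IntervalIntegrable (fun r => ybar r (Xbar r τ x)) volume τ t)
    (hXhat_intble : ∀ τ t : ℝ, 0 ≤ τ → τ ≤ t → t ≤ T → ∀ x,
      IntervalIntegrable (fun r => ybar r (Xhat r τ x) + uhat r (Xhat r τ x)) volume τ t)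
    (hXbar_eq : ∀ τ t : ℝ, 0 ≤ τ → τ ≤ t → t ≤ T → ∀ x,
      Xbar t τ x = x + ∫ r in τ..t, ybar r (Xbar r τ x))
    (hXhat_eq : ∀ τ t : ℝ, 0 ≤ τ → τ ≤ t → t ≤ T → ∀ x,
      Xhat t τ x = x + ∫ r in τ..t, (ybar r (Xhat r τ x) + uhat r (Xhat r τ x)))
    (g : ℝ → ℝ) (hg_meas : Measurable g) (hg_nonneg : ∀ t, 0 ≤ g t)
    (hg_int : IntervalIntegrable (fun t => (g t)^2) volume 0 T)
    (hu_bound : ∀ t ∈ Set.Icc (0:ℝ) T, ∀ x, ‖uhat t x‖ ≤ g t)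
    (hg_small : Real.sqrt (∫ t in (0:ℝ)..T, (g t)^2) ≤ (Real.sqrt T)⁻¹ * Real.exp (-(L*T)) * ε)
    (hXbar_exit : ∀ T₀ ∈ Set.Ioo 0 T₀star, ∀ T₁ ∈ Set.Ioo 0 T₁star, ∀ x ∈ closure Ω,
      ∃ t ∈ Set.Icc T₀ (T - 2*T₁), 2*ε ≤ Metric.infDist (Xbar t T₀ x) Ω) :
    ∀ T₀ ∈ Set.Ioo 0 T₀star, ∀ T₁ ∈ Set.Ioo 0 T₁star, ∀ x ∈ closure Ω,
      ∃ t ∈ Set.Icc T₀ (T - 2*T₁), ε ≤ Metric.infDist (Xhat t T₀ x) Ω :=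
  stmt_1_general T L ε T₀star T₁star hT hL hε Ω ybar uhat Xbar Xhat hlip hXbar_cont hXhat_cont
    hXbar_intble hXhat_intble hXbar_eq hXhat_eq g hg_meas hg_int hu_bound hg_small hXbar_exit
end

section
/- Adopt the Carleman weight setup, and let 0 ≤ T' ≤ T. Assume in addition that θ is monotone nonincreasing on [0,T'] and that 1 ≤ θ(t) ≤ 2 for all t ∈ [0,T']. Let δ ≥ 0, let 0 ≤ τ ≤ t ≤ T' and x ∈ ℝ² be such that |X̂(τ,t,x) − X̄(τ,t,x)| ≤ δ. Then φ(t,x) − φ(τ, X̂(τ,t,x)) ≤ 2 · λ · K · exp(λ(6m+1)) · δ. -/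
/-! Split `φ(t,x) − φ(τ,y)` as `(θ t − θ τ)(Λ − e^{λψ(τ,y)}) + θ t (e^{λψ(τ,y)} − e^{λψ(t,x)})`
with `Λ = λ e^{6λ(m+1)}`. The first term is `≤ 0` because `θ` is nonincreasing and `Λ` dominates
`e^{λψ}`. For the second, transport gives `ψ(t,x) = ψ(τ, X̄(τ,t,x))`, so the Lipschitz bound in
space controls the exponent gap by `λKδ`, and convexity of `exp` turns that gap into
`e^{λ(6m+1)} λKδ`; finally `θ t ≤ 2`. -/

/-- The Carleman weight `φ(t,x) = θ(t)(λ e^{6λ(m+1)} − e^{λψ(t,x)})`. -/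
noncomputable def phiW (θ : ℝ → ℝ) (ψ : ℝ → EuclideanSpace ℝ (Fin 2) → ℝ) (m lam t : ℝ)
    (x : EuclideanSpace ℝ (Fin 2)) : ℝ :=
  θ t * (lam * Real.exp (6*lam*(m+1)) - Real.exp (lam * ψ t x))

namespace Real

theorem exp_sub_exp_le_exp_mul_sub (a b : ℝ) : exp a - exp b ≤ exp a * (a - b) := by
  have h : exp a * (b - a + 1) ≤ exp b := by
    calc exp a * (b - a + 1) ≤ exp a * exp (b - a) := by gcongr; exact add_one_le_exp _
      _ = exp b := by rw [← exp_add]; ring_nf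
  linarith

theorem exp_sub_exp_le_of_le {a b c d : ℝ} (hac : a ≤ c) (hab : a - b ≤ d) (hd : 0 ≤ d) :
    exp a - exp b ≤ exp c * d :=
  calc exp a - exp b ≤ exp a * (a - b) := exp_sub_exp_le_exp_mul_sub a b
    _ ≤ exp a * d := by gcongr
    _ ≤ exp c * d := by gcongr

end Real

theorem phiW_sub_phiW_le_of_le {θ : ℝ → ℝ} {ψ : ℝ → EuclideanSpace ℝ (Fin 2) → ℝ}
    {m lam t τ : ℝ} {x y : EuclideanSpace ℝ (Fin 2)} (hθ : θ t ≤ θ τ)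
    (hψ : Real.exp (lam * ψ τ y) ≤ lam * Real.exp (6 * lam * (m + 1))) :
    phiW θ ψ m lam t x - phiW θ ψ m lam τ y
      ≤ θ t * (Real.exp (lam * ψ τ y) - Real.exp (lam * ψ t x)) := by
  have h := mul_le_mul_of_nonneg_right hθ (sub_nonneg.mpr hψ)
  simp only [phiW]
  linarith

theorem sub_le_of_transport_of_lipschitz {E : Type*} [SeminormedAddCommGroup E]
    {f g : E → ℝ} {K δ : ℝ} {y z x : E} (hK : 0 ≤ K)
    (hlip : |f y - f z| ≤ K * ‖y - z‖) (htransport : f z = g x) (hclose : ‖y - z‖ ≤ δ) :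
    f y - g x ≤ K * δ :=
  calc f y - g x = f y - f z := by rw [htransport]
    _ ≤ |f y - f z| := le_abs_self _
    _ ≤ K * ‖y - z‖ := hlip
    _ ≤ K * δ := by gcongr

theorem stmt_6_general
    (T m lam K : ℝ) (hlam : 1 ≤ lam) (hK : 0 ≤ K)
    (θ : ℝ → ℝ)
    (ψ : ℝ → EuclideanSpace ℝ (Fin 2) → ℝ)
    (hψub : ∀ t ∈ Set.Icc (0:ℝ) T, ∀ x, ψ t x ≤ 6*m + 1)
    (hψlip : ∀ t ∈ Set.Icc (0:ℝ) T, ∀ x x', |ψ t x - ψ t x'| ≤ K * ‖x - x'‖)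
    (Xbar Xhat : ℝ → ℝ → EuclideanSpace ℝ (Fin 2) → EuclideanSpace ℝ (Fin 2))
    (htransport : ∀ t ∈ Set.Icc (0:ℝ) T, ∀ τ ∈ Set.Icc (0:ℝ) T, ∀ x,
      ψ τ (Xbar τ t x) = ψ t x)
    (T' : ℝ) (hT'T : T' ≤ T)
    (hθanti : AntitoneOn θ (Set.Icc 0 T'))
    (hθ12 : ∀ t ∈ Set.Icc (0:ℝ) T', 1 ≤ θ t ∧ θ t ≤ 2)
    (δ : ℝ) (hδ : 0 ≤ δ)
    (τ t : ℝ) (hτ0 : 0 ≤ τ) (hτt : τ ≤ t) (htT' : t ≤ T')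
    (x : EuclideanSpace ℝ (Fin 2))
    (hclose : ‖Xhat τ t x - Xbar τ t x‖ ≤ δ) :
    phiW θ ψ m lam t x - phiW θ ψ m lam τ (Xhat τ t x)
      ≤ 2 * lam * K * Real.exp (lam*(6*m+1)) * δ := by
  have hτ' : τ ∈ Set.Icc (0:ℝ) T' := ⟨hτ0, hτt.trans htT'⟩
  have ht' : t ∈ Set.Icc (0:ℝ) T' := ⟨hτ0.trans hτt, htT'⟩
  have hτ : τ ∈ Set.Icc (0:ℝ) T := ⟨hτ0, hτ'.2.trans hT'T⟩
  have ht : t ∈ Set.Icc (0:ℝ) T := ⟨ht'.1, htT'.trans hT'T⟩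
  have hlam0 : 0 ≤ lam := zero_le_one.trans hlam
  have hgap : lam * ψ τ (Xhat τ t x) - lam * ψ t x ≤ lam * (K * δ) := by
    rw [← mul_sub]
    exact mul_le_mul_of_nonneg_left (sub_le_of_transport_of_lipschitz hK (hψlip τ hτ _ _)
      (htransport t ht τ hτ x) hclose) hlam0
  have hψτ : lam * ψ τ (Xhat τ t x) ≤ lam * (6 * m + 1) :=
    mul_le_mul_of_nonneg_left (hψub τ hτ _) hlam0
  have hΛ : Real.exp (lam * ψ τ (Xhat τ t x)) ≤ lam * Real.exp (6 * lam * (m + 1)) :=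
    calc Real.exp (lam * ψ τ (Xhat τ t x)) ≤ Real.exp (6 * lam * (m + 1)) :=
          Real.exp_le_exp.mpr (hψτ.trans (by nlinarith))
      _ ≤ lam * Real.exp (6 * lam * (m + 1)) := le_mul_of_one_le_left (Real.exp_pos _).le hlam
  have hexp := Real.exp_sub_exp_le_of_le hψτ hgap (by positivity)
  obtain ⟨hθt1, hθt2⟩ := hθ12 t ht'
  calc phiW θ ψ m lam t x - phiW θ ψ m lam τ (Xhat τ t x)
      ≤ θ t * (Real.exp (lam * ψ τ (Xhat τ t x)) - Real.exp (lam * ψ t x)) :=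
        phiW_sub_phiW_le_of_le (hθanti hτ' ht' hτt) hΛ
    _ ≤ θ t * (Real.exp (lam * (6 * m + 1)) * (lam * (K * δ))) := by gcongr
    _ ≤ 2 * (Real.exp (lam * (6 * m + 1)) * (lam * (K * δ))) := by gcongr
    _ = 2 * lam * K * Real.exp (lam*(6*m+1)) * δ := by ring

/-- Estimate (4.48) in item 1 of Lemma 4.4 of the paper, with explicit constants:
for `0 ≤ τ ≤ t ≤ T'` (where `θ` is nonincreasing and valued in `[1,2]` on `[0,T']`),
`φ(t,x) − φ(τ, X̂(τ,t,x)) ≤ 2 λ K e^{λ(6m+1)} δ` whenever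
`|X̂(τ,t,x) − X̄(τ,t,x)| ≤ δ`. -/
theorem stmt_6
    (T m lam K : ℝ) (hT : 0 < T) (hm : 1 ≤ m) (hlam : 1 ≤ lam) (hK : 0 ≤ K)
    (θ : ℝ → ℝ) (hθ1 : ∀ t ∈ Set.Icc (0:ℝ) T, 1 ≤ θ t)
    (ψ : ℝ → EuclideanSpace ℝ (Fin 2) → ℝ)
    (hψlb : ∀ t ∈ Set.Icc (0:ℝ) T, ∀ x, 6*m ≤ ψ t x)
    (hψub : ∀ t ∈ Set.Icc (0:ℝ) T, ∀ x, ψ t x ≤ 6*m + 1)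
    (hψlip : ∀ t ∈ Set.Icc (0:ℝ) T, ∀ x x', |ψ t x - ψ t x'| ≤ K * ‖x - x'‖)
    (Xbar Xhat : ℝ → ℝ → EuclideanSpace ℝ (Fin 2) → EuclideanSpace ℝ (Fin 2))
    (htransport : ∀ t ∈ Set.Icc (0:ℝ) T, ∀ τ ∈ Set.Icc (0:ℝ) T, ∀ x,
      ψ τ (Xbar τ t x) = ψ t x)
    (T' : ℝ) (hT'0 : 0 ≤ T') (hT'T : T' ≤ T)
    (hθanti : AntitoneOn θ (Set.Icc 0 T'))
    (hθ12 : ∀ t ∈ Set.Icc (0:ℝ) T', 1 ≤ θ t ∧ θ t ≤ 2)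
    (δ : ℝ) (hδ : 0 ≤ δ)
    (τ t : ℝ) (hτ0 : 0 ≤ τ) (hτt : τ ≤ t) (htT' : t ≤ T')
    (x : EuclideanSpace ℝ (Fin 2))
    (hclose : ‖Xhat τ t x - Xbar τ t x‖ ≤ δ) :
    phiW θ ψ m lam t x - phiW θ ψ m lam τ (Xhat τ t x)
      ≤ 2 * lam * K * Real.exp (lam*(6*m+1)) * δ :=
  stmt_6_general T m lam K hlam hK θ ψ hψub hψlip Xbar Xhat htransport T' hT'T hθanti hθ12 δ hδ τ t
    hτ0 hτt htT' x hclose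
end

section
/- Adopt the Carleman weight setup, and let 0 ≤ T₀ ≤ T. Assume in addition that θ is monotone nondecreasing on [T₀,T]. Let δ ≥ 0, let T₀ ≤ t ≤ τ ≤ T and x ∈ ℝ² be such that θ(t) · |X̂(τ,t,x) − X̄(τ,t,x)| ≤ δ. Then φ(t,x) − φ(τ, X̂(τ,t,x)) ≤ λ · K · exp(λ(6m+1)) · δ − (λ · exp(6λ(m+1)) − exp(λ(6m+1))) · (θ(τ) − θ(t)). -/
namespace Real

theorem exp_mul_sub_exp_mul_le {lam K M u v d : ℝ} (hlam : 0 ≤ lam) (hu : u ≤ M)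
    (huv : |u - v| ≤ K * d) :
    exp (lam * u) - exp (lam * v) ≤ lam * K * exp (lam * M) * d :=
  calc exp (lam * u) - exp (lam * v)
      ≤ exp (lam * u) * (lam * (u - v)) := by
        simpa only [mul_sub] using exp_sub_exp_le_exp_mul_sub (lam * u) (lam * v)
    _ ≤ exp (lam * u) * (lam * (K * d)) := by
        gcongr
        exact (le_abs_self _).trans huv
    _ ≤ exp (lam * M) * (lam * (K * d)) := by
        have : 0 ≤ K * d := (abs_nonneg _).trans huv
        gcongr
    _ = lam * K * exp (lam * M) * d := by ring

end Real

theorem stmt_8_general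
    (T m lam K : ℝ) (hlam : 1 ≤ lam) (hK : 0 ≤ K)
    (θ : ℝ → ℝ) (hθ1 : ∀ t ∈ Set.Icc (0:ℝ) T, 1 ≤ θ t)
    (ψ : ℝ → EuclideanSpace ℝ (Fin 2) → ℝ)
    (hψub : ∀ t ∈ Set.Icc (0:ℝ) T, ∀ x, ψ t x ≤ 6*m + 1)
    (hψlip : ∀ t ∈ Set.Icc (0:ℝ) T, ∀ x x', |ψ t x - ψ t x'| ≤ K * ‖x - x'‖)
    (Xbar Xhat : ℝ → ℝ → EuclideanSpace ℝ (Fin 2) → EuclideanSpace ℝ (Fin 2))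
    (htransport : ∀ t ∈ Set.Icc (0:ℝ) T, ∀ τ ∈ Set.Icc (0:ℝ) T, ∀ x,
      ψ τ (Xbar τ t x) = ψ t x)
    (T₀ : ℝ) (hT₀0 : 0 ≤ T₀)
    (hθmono : MonotoneOn θ (Set.Icc T₀ T))
    (δ : ℝ)
    (t τ : ℝ) (hT₀t : T₀ ≤ t) (htτ : t ≤ τ) (hτT : τ ≤ T)
    (x : EuclideanSpace ℝ (Fin 2))
    (hclose : θ t * ‖Xhat τ t x - Xbar τ t x‖ ≤ δ) :
    phiW θ ψ m lam t x - phiW θ ψ m lam τ (Xhat τ t x)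
      ≤ lam * K * Real.exp (lam*(6*m+1)) * δ
        - (lam * Real.exp (6*lam*(m+1)) - Real.exp (lam*(6*m+1))) * (θ τ - θ t) := by
  have htI : t ∈ Set.Icc (0:ℝ) T := ⟨hT₀0.trans hT₀t, htτ.trans hτT⟩
  have hτI : τ ∈ Set.Icc (0:ℝ) T := ⟨htI.1.trans htτ, hτT⟩
  have hθt : 0 ≤ θ t := zero_le_one.trans (hθ1 t htI)
  have hθle : θ t ≤ θ τ := hθmono ⟨hT₀t, htI.2⟩ ⟨hT₀t.trans htτ, hτT⟩ htτ
  have hlam0 : 0 ≤ lam := zero_le_one.trans hlam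
  have hψhat := hψub τ hτI (Xhat τ t x)
  have hexp_hat : Real.exp (lam * ψ τ (Xhat τ t x)) ≤ Real.exp (lam * (6*m+1)) :=
    Real.exp_le_exp.2 (mul_le_mul_of_nonneg_left hψhat hlam0)
  have hdrift : θ t * (Real.exp (lam * ψ τ (Xhat τ t x)) - Real.exp (lam * ψ t x))
      ≤ lam * K * Real.exp (lam * (6*m+1)) * δ :=
    calc θ t * (Real.exp (lam * ψ τ (Xhat τ t x)) - Real.exp (lam * ψ t x))
        ≤ θ t * (lam * K * Real.exp (lam * (6*m+1)) * ‖Xhat τ t x - Xbar τ t x‖) := by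
          rw [← htransport t htI τ hτI x]
          exact mul_le_mul_of_nonneg_left
            (Real.exp_mul_sub_exp_mul_le hlam0 hψhat (hψlip τ hτI _ _)) hθt
      _ = lam * K * Real.exp (lam * (6*m+1)) * (θ t * ‖Xhat τ t x - Xbar τ t x‖) := by ring
      _ ≤ lam * K * Real.exp (lam * (6*m+1)) * δ := by gcongr
  unfold phiW
  linear_combination hdrift + mul_le_mul_of_nonneg_left hexp_hat (sub_nonneg.2 hθle)

/-- Estimate (4.50) in item 2 of Lemma 4.4 of the paper, with explicit constant
`c₃ = λ e^{6λ(m+1)} − e^{λ(6m+1)}`: for `T₀ ≤ t ≤ τ ≤ T` (with `θ` nondecreasing on `[T₀,T]`),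
`φ(t,x) − φ(τ, X̂(τ,t,x)) ≤ λ K e^{λ(6m+1)} δ − c₃ (θ(τ) − θ(t))` whenever
`θ(t) |X̂(τ,t,x) − X̄(τ,t,x)| ≤ δ`. -/
theorem stmt_8
    (T m lam K : ℝ) (hT : 0 < T) (hm : 1 ≤ m) (hlam : 1 ≤ lam) (hK : 0 ≤ K)
    (θ : ℝ → ℝ) (hθ1 : ∀ t ∈ Set.Icc (0:ℝ) T, 1 ≤ θ t)
    (ψ : ℝ → EuclideanSpace ℝ (Fin 2) → ℝ)
    (hψlb : ∀ t ∈ Set.Icc (0:ℝ) T, ∀ x, 6*m ≤ ψ t x)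
    (hψub : ∀ t ∈ Set.Icc (0:ℝ) T, ∀ x, ψ t x ≤ 6*m + 1)
    (hψlip : ∀ t ∈ Set.Icc (0:ℝ) T, ∀ x x', |ψ t x - ψ t x'| ≤ K * ‖x - x'‖)
    (Xbar Xhat : ℝ → ℝ → EuclideanSpace ℝ (Fin 2) → EuclideanSpace ℝ (Fin 2))
    (htransport : ∀ t ∈ Set.Icc (0:ℝ) T, ∀ τ ∈ Set.Icc (0:ℝ) T, ∀ x,
      ψ τ (Xbar τ t x) = ψ t x)
    (T₀ : ℝ) (hT₀0 : 0 ≤ T₀) (hT₀T : T₀ ≤ T)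
    (hθmono : MonotoneOn θ (Set.Icc T₀ T))
    (δ : ℝ) (hδ : 0 ≤ δ)
    (t τ : ℝ) (hT₀t : T₀ ≤ t) (htτ : t ≤ τ) (hτT : τ ≤ T)
    (x : EuclideanSpace ℝ (Fin 2))
    (hclose : θ t * ‖Xhat τ t x - Xbar τ t x‖ ≤ δ) :
    phiW θ ψ m lam t x - phiW θ ψ m lam τ (Xhat τ t x)
      ≤ lam * K * Real.exp (lam*(6*m+1)) * δ
        - (lam * Real.exp (6*lam*(m+1)) - Real.exp (lam*(6*m+1))) * (θ τ - θ t) :=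
  stmt_8_general T m lam K hlam hK θ hθ1 ψ hψub hψlip Xbar Xhat htransport T₀ hT₀0 hθmono δ t τ hT₀t
    htτ hτT x hclose
end

section
/- Adopt the Carleman weight setup, let 0 ≤ T₀ ≤ T, and assume in addition that θ is monotone nondecreasing on [T₀,T]. Set c₃ := λ · exp(6λ(m+1)) − exp(λ(6m+1)) and ℵ(t,x) := ξ(t,x)^{−2} · exp(s·φ(t,x)). Let s ≥ 2/c₃, let δ ≥ 0, and let T₀ ≤ t ≤ τ ≤ T and x ∈ ℝ² be such that θ(t) · |X̂(τ,t,x) − X̄(τ,t,x)| ≤ δ. Then ℵ(t,x) ≤ exp((s+2) · λ · K · exp(λ(6m+1)) · δ) · ℵ(τ, X̂(τ,t,x)). -/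
/-- The Carleman weight `ξ(t,x) = θ(t) e^{λψ(t,x)}`. -/
noncomputable def xiW (θ : ℝ → ℝ) (ψ : ℝ → EuclideanSpace ℝ (Fin 2) → ℝ) (lam t : ℝ)
    (x : EuclideanSpace ℝ (Fin 2)) : ℝ :=
  θ t * Real.exp (lam * ψ t x)

/-- The weight `ℵ(t,x) = ξ(t,x)^{-2} e^{s φ(t,x)}`. -/
noncomputable def alephW (θ : ℝ → ℝ) (ψ : ℝ → EuclideanSpace ℝ (Fin 2) → ℝ) (m lam s t : ℝ)
    (x : EuclideanSpace ℝ (Fin 2)) : ℝ :=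
  ((xiW θ ψ lam t x)^2)⁻¹ * Real.exp (s * phiW θ ψ m lam t x)

/-! Write `ℵ(t,x) = θ(t)⁻² exp(sθ(t)(A − e^{λψ(t,x)}) − 2λψ(t,x))` with `A = λe^{6λ(m+1)}`.
Since `ψ` is transported by `X̄`, `ψ(t,x) = ψ(τ, X̄(τ,t,x))`, which differs from `ψ(τ, X̂(τ,t,x))` by at
most `K|X̂ − X̄|`; as `e^{λψ}` is `λe^{λ(6m+1)}`-Lipschitz in `ψ` below `6m+1`, replacing `ψ(t,x)` by
`ψ(τ, X̂)` costs a factor `exp((sθ(t)e^{λ(6m+1)} + 2)λK|X̂ − X̄|) ≤ exp((s+2)λKe^{λ(6m+1)}δ)`. It remains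
to pass from `θ(t)` to `θ(τ) ≥ θ(t)`: the map `u ↦ u⁻² e^{s c u}` is nondecreasing for `scu ≥ 2`, and
here `c = A − e^{λψ} ≥ c₃` and `θ(t) ≥ 1`, so `scθ(t) ≥ sc₃ ≥ 2`. -/

open Real

lemma Real.exp_sub_exp_le_exp_mul_abs {a b M : ℝ} (hb : b ≤ M) :
    exp b - exp a ≤ exp M * |b - a| := by
  have hsplit : exp b - exp a = exp b * (1 - exp (a - b)) := by
    rw [exp_sub]; field_simp
  have hlin : 1 - exp (a - b) ≤ b - a := by linarith [add_one_le_exp (a - b)]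
  calc exp b - exp a = exp b * (1 - exp (a - b)) := hsplit
    _ ≤ exp b * |b - a| := by gcongr; exact hlin.trans (le_abs_self _)
    _ ≤ exp M * |b - a| := by gcongr

/-- The paper's monotonicity of `u ↦ u² e^{-k u}`, in reciprocal form; `2 ≤ k u` is exactly
where the logarithmic derivative `k - 2/u` is nonnegative. -/
lemma inv_sq_mul_exp_mul_le {k u v : ℝ} (hu : 0 < u) (huv : u ≤ v) (hk : 2 ≤ k * u) :
    (u ^ 2)⁻¹ * exp (k * u) ≤ (v ^ 2)⁻¹ * exp (k * v) := by
  have hv : 0 < v := hu.trans_le huv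
  have hratio : v / u ≤ exp ((v - u) / u) :=
    calc v / u = (v - u) / u + 1 := by field_simp; ring
      _ ≤ exp ((v - u) / u) := add_one_le_exp _
  have hexponent : 2 * ((v - u) / u) ≤ k * (v - u) := by
    rw [← mul_div_assoc, div_le_iff₀ hu]
    nlinarith [sub_nonneg.2 huv]
  have hsq : (v / u) ^ 2 ≤ exp (k * (v - u)) :=
    calc (v / u) ^ 2 ≤ exp ((v - u) / u) ^ 2 := by gcongr
      _ = exp (2 * ((v - u) / u)) := by rw [← exp_nat_mul]; norm_num
      _ ≤ exp (k * (v - u)) := exp_le_exp.2 hexponent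
  rw [div_pow, div_le_iff₀ (by positivity), mul_sub, exp_sub,
    div_mul_eq_mul_div, le_div_iff₀ (exp_pos _)] at hsq
  rw [inv_mul_le_iff₀ (by positivity), mul_left_comm, le_inv_mul_iff₀ (by positivity)]
  linarith

/-- `ℵ` as a function of the values `u = θ(t)` and `p = ψ(t,x)`, with `A = λ e^{6λ(m+1)}`. -/
noncomputable def alephProfile (A lam s u p : ℝ) : ℝ :=
  (u ^ 2)⁻¹ * exp (s * u * (A - exp (lam * p)) - 2 * (lam * p))

lemma alephProfile_nonneg (A lam s u p : ℝ) : 0 ≤ alephProfile A lam s u p := by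
  unfold alephProfile; positivity

lemma alephW_eq_alephProfile (θ : ℝ → ℝ) (ψ : ℝ → EuclideanSpace ℝ (Fin 2) → ℝ)
    (m lam s t : ℝ) (x : EuclideanSpace ℝ (Fin 2)) :
    alephW θ ψ m lam s t x =
      alephProfile (lam * exp (6 * lam * (m + 1))) lam s (θ t) (ψ t x) := by
  rw [alephW, xiW, phiW, alephProfile, mul_pow, mul_inv, exp_sub, ← exp_nat_mul]
  field_simp
  ring_nf

lemma alephProfile_le_exp_mul_alephProfile {A lam s u p q M : ℝ} (hlam : 0 ≤ lam) (hs : 0 ≤ s)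
    (hu : 0 ≤ u) (hq : q ≤ M) :
    alephProfile A lam s u p ≤
      exp ((s * u * exp (lam * M) + 2) * lam * |q - p|) * alephProfile A lam s u q := by
  have hexp : exp (lam * q) - exp (lam * p) ≤ exp (lam * M) * (lam * |q - p|) := by
    have := exp_sub_exp_le_exp_mul_abs (a := lam * p) (mul_le_mul_of_nonneg_left hq hlam)
    rwa [← mul_sub, abs_mul, abs_of_nonneg hlam] at this
  have hlin : lam * q - lam * p ≤ lam * |q - p| := by
    rw [← mul_sub]; exact mul_le_mul_of_nonneg_left (le_abs_self _) hlam
  have hsu : 0 ≤ s * u := mul_nonneg hs hu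
  rw [alephProfile, alephProfile, mul_left_comm (exp _), ← exp_add]
  gcongr
  nlinarith [mul_le_mul_of_nonneg_left hexp hsu]

lemma alephProfile_le_of_le {A lam s u v q : ℝ} (hu : 0 < u) (huv : u ≤ v)
    (hs : 2 ≤ s * (A - exp (lam * q)) * u) :
    alephProfile A lam s u q ≤ alephProfile A lam s v q := by
  have hmono := inv_sq_mul_exp_mul_le hu huv hs
  simp only [alephProfile, exp_sub, mul_div_assoc']
  rw [mul_right_comm s u, mul_right_comm s v]
  gcongr

lemma carleman_c₃_pos {m lam : ℝ} (hlam : 1 ≤ lam) :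
    0 < lam * exp (6 * lam * (m + 1)) - exp (lam * (6 * m + 1)) := by
  have : exp (lam * (6 * m + 1)) < exp (6 * lam * (m + 1)) := exp_lt_exp.2 (by nlinarith)
  nlinarith [le_mul_of_one_le_left (exp_pos (6 * lam * (m + 1))).le hlam]

theorem stmt_9_general
    (T m lam K : ℝ) (hm : 1 ≤ m) (hlam : 1 ≤ lam) (hK : 0 ≤ K)
    (θ : ℝ → ℝ) (hθ1 : ∀ t ∈ Set.Icc (0:ℝ) T, 1 ≤ θ t)
    (ψ : ℝ → EuclideanSpace ℝ (Fin 2) → ℝ)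
    (hψub : ∀ t ∈ Set.Icc (0:ℝ) T, ∀ x, ψ t x ≤ 6*m + 1)
    (hψlip : ∀ t ∈ Set.Icc (0:ℝ) T, ∀ x x', |ψ t x - ψ t x'| ≤ K * ‖x - x'‖)
    (Xbar Xhat : ℝ → ℝ → EuclideanSpace ℝ (Fin 2) → EuclideanSpace ℝ (Fin 2))
    (htransport : ∀ t ∈ Set.Icc (0:ℝ) T, ∀ τ ∈ Set.Icc (0:ℝ) T, ∀ x,
      ψ τ (Xbar τ t x) = ψ t x)
    (T₀ : ℝ) (hT₀0 : 0 ≤ T₀)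
    (hθmono : MonotoneOn θ (Set.Icc T₀ T))
    (s : ℝ)
    (hs : 2 / (lam * Real.exp (6*lam*(m+1)) - Real.exp (lam*(6*m+1))) ≤ s)
    (δ : ℝ)
    (t τ : ℝ) (hT₀t : T₀ ≤ t) (htτ : t ≤ τ) (hτT : τ ≤ T)
    (x : EuclideanSpace ℝ (Fin 2))
    (hclose : θ t * ‖Xhat τ t x - Xbar τ t x‖ ≤ δ) :
    alephW θ ψ m lam s t x
      ≤ Real.exp ((s+2) * lam * K * Real.exp (lam*(6*m+1)) * δ)
        * alephW θ ψ m lam s τ (Xhat τ t x) := by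
  have htI : t ∈ Set.Icc (0:ℝ) T := ⟨hT₀0.trans hT₀t, htτ.trans hτT⟩
  have hτI : τ ∈ Set.Icc (0:ℝ) T := ⟨htI.1.trans htτ, hτT⟩
  have hθt : 1 ≤ θ t := hθ1 t htI
  have hθtτ : θ t ≤ θ τ := hθmono ⟨hT₀t, htI.2⟩ ⟨hT₀t.trans htτ, hτT⟩ htτ
  set d := ‖Xhat τ t x - Xbar τ t x‖
  set q := ψ τ (Xhat τ t x)
  have hq : q ≤ 6 * m + 1 := hψub τ hτI _
  have hpq : |q - ψ t x| ≤ K * d := htransport t htI τ hτI x ▸ hψlip τ hτI _ _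
  have hc₃ := carleman_c₃_pos (m := m) hlam
  have hs0 : 0 ≤ s := (div_pos two_pos hc₃).le.trans hs
  have hsc : 2 ≤ s * (lam * exp (6 * lam * (m + 1)) - exp (lam * q)) * θ t := by
    rw [div_le_iff₀ hc₃] at hs
    have : exp (lam * q) ≤ exp (lam * (6 * m + 1)) := by gcongr
    nlinarith [mul_nonneg hs0 (sub_nonneg.2 this)]
  have hexponent : (s * θ t * exp (lam * (6 * m + 1)) + 2) * lam * |q - ψ t x| ≤
      (s + 2) * lam * K * exp (lam * (6 * m + 1)) * δ := by
    have hE : 1 ≤ exp (lam * (6 * m + 1)) := one_le_exp (by positivity)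
    have hd : d ≤ δ := le_trans (le_mul_of_one_le_left (norm_nonneg _) hθt) hclose
    have hlamK : 0 ≤ lam * K := by positivity
    calc _ ≤ (s * θ t * exp (lam * (6 * m + 1)) + 2) * lam * (K * d) := by gcongr
      _ = lam * K * (s * exp (lam * (6 * m + 1)) * (θ t * d) + 2 * d) := by ring
      _ ≤ lam * K * (s * exp (lam * (6 * m + 1)) * δ + 2 * (exp (lam * (6 * m + 1)) * δ)) := by
        gcongr
        exact hd.trans (le_mul_of_one_le_left ((norm_nonneg _).trans hd) hE)
      _ = _ := by ring
  rw [alephW_eq_alephProfile, alephW_eq_alephProfile]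
  calc _ ≤ _ := alephProfile_le_exp_mul_alephProfile (by linarith) hs0 (by linarith) hq
    _ ≤ _ := by gcongr ?_ * ?_; exact alephProfile_le_of_le (by linarith) hθtτ hsc
    _ ≤ _ := mul_le_mul_of_nonneg_right (exp_le_exp.2 hexponent) (alephProfile_nonneg ..)

/-- The case `T₀ ≤ t ≤ τ` of Proposition 4.5 of the paper, with explicit constant:
for `s ≥ 2/c₃` (where `c₃ = λ e^{6λ(m+1)} − e^{λ(6m+1)}`),
`ℵ(t,x) ≤ e^{(s+2) λ K e^{λ(6m+1)} δ} ℵ(τ, X̂(τ,t,x))` whenever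
`θ(t) |X̂(τ,t,x) − X̄(τ,t,x)| ≤ δ`. -/
theorem stmt_9
    (T m lam K : ℝ) (hT : 0 < T) (hm : 1 ≤ m) (hlam : 1 ≤ lam) (hK : 0 ≤ K)
    (θ : ℝ → ℝ) (hθ1 : ∀ t ∈ Set.Icc (0:ℝ) T, 1 ≤ θ t)
    (ψ : ℝ → EuclideanSpace ℝ (Fin 2) → ℝ)
    (hψlb : ∀ t ∈ Set.Icc (0:ℝ) T, ∀ x, 6*m ≤ ψ t x)
    (hψub : ∀ t ∈ Set.Icc (0:ℝ) T, ∀ x, ψ t x ≤ 6*m + 1)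
    (hψlip : ∀ t ∈ Set.Icc (0:ℝ) T, ∀ x x', |ψ t x - ψ t x'| ≤ K * ‖x - x'‖)
    (Xbar Xhat : ℝ → ℝ → EuclideanSpace ℝ (Fin 2) → EuclideanSpace ℝ (Fin 2))
    (htransport : ∀ t ∈ Set.Icc (0:ℝ) T, ∀ τ ∈ Set.Icc (0:ℝ) T, ∀ x,
      ψ τ (Xbar τ t x) = ψ t x)
    (T₀ : ℝ) (hT₀0 : 0 ≤ T₀) (hT₀T : T₀ ≤ T)
    (hθmono : MonotoneOn θ (Set.Icc T₀ T))
    (s : ℝ)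
    (hs : 2 / (lam * Real.exp (6*lam*(m+1)) - Real.exp (lam*(6*m+1))) ≤ s)
    (δ : ℝ) (hδ : 0 ≤ δ)
    (t τ : ℝ) (hT₀t : T₀ ≤ t) (htτ : t ≤ τ) (hτT : τ ≤ T)
    (x : EuclideanSpace ℝ (Fin 2))
    (hclose : θ t * ‖Xhat τ t x - Xbar τ t x‖ ≤ δ) :
    alephW θ ψ m lam s t x
      ≤ Real.exp ((s+2) * lam * K * Real.exp (lam*(6*m+1)) * δ)
        * alephW θ ψ m lam s τ (Xhat τ t x) :=
  stmt_9_general T m lam K hm hlam hK θ hθ1 ψ hψub hψlip Xbar Xhat htransport T₀ hT₀0 hθmono s hs δ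
    t τ hT₀t htτ hτT x hclose
end

section
/- Adopt the Carleman weight setup, let 0 ≤ T' ≤ T, and assume in addition that θ is monotone nonincreasing on [0,T'] and 1 ≤ θ(t) ≤ 2 for all t ∈ [0,T']. Set ℵ(t,x) := ξ(t,x)^{−2} · exp(s·φ(t,x)) with s > 0. Let δ ≥ 0 and let 0 ≤ τ ≤ t ≤ T' and x ∈ ℝ² be such that |X̂(τ,t,x) − X̄(τ,t,x)| ≤ δ. Then ℵ(t,x) ≤ 4 · exp(2(s+1) · λ · K · exp(λ(6m+1)) · δ) · ℵ(τ, X̂(τ,t,x)). -/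
/-!
Write `ℵ = θ⁻² exp (s φ - 2 λ ψ)`. The difference `φ(t,x) - φ(τ,y)` splits as
`(θ τ - θ t)(e^{λψ(t,x)} - λ e^{6λ(m+1)}) + θ τ (e^{λψ(τ,y)} - e^{λψ(t,x)})`: the first term is
nonpositive because `θ` decreases and `λψ ≤ λ(6m+1)`, the second is at most
`2 λ e^{λ(6m+1)} |ψ(τ,y) - ψ(t,x)|` because `exp` is `e^{λ(6m+1)}`-Lipschitz below `λ(6m+1)`.
For `y = X̂(τ,t,x)` transport gives `ψ(t,x) = ψ(τ, X̄(τ,t,x))`, so that gap is at most `Kδ`.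
The factor `4` absorbs `θ(t)⁻² ≤ 1 ≤ 4 θ(τ)⁻²`.
-/

theorem Real.exp_sub_exp_le_exp_mul_abs_s10 {a b c : ℝ} (hac : a ≤ c) :
    Real.exp a - Real.exp b ≤ Real.exp c * |a - b| := by
  have hlin : 1 - Real.exp (b - a) ≤ a - b := by linarith [Real.add_one_le_exp (b - a)]
  calc Real.exp a - Real.exp b = Real.exp a * (1 - Real.exp (b - a)) := by
        rw [Real.exp_sub]; field_simp
    _ ≤ Real.exp a * |a - b| :=
        mul_le_mul_of_nonneg_left (hlin.trans (le_abs_self _)) (Real.exp_pos a).le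
    _ ≤ Real.exp c * |a - b| :=
        mul_le_mul_of_nonneg_right (Real.exp_le_exp.mpr hac) (abs_nonneg _)

section Weights

variable {θ : ℝ → ℝ} {ψ : ℝ → EuclideanSpace ℝ (Fin 2) → ℝ} {m lam : ℝ}

lemma alephW_eq (s u : ℝ) (y : EuclideanSpace ℝ (Fin 2)) :
    alephW θ ψ m lam s u y
      = ((θ u)^2)⁻¹ * Real.exp (s * phiW θ ψ m lam u y - 2 * (lam * ψ u y)) := by
  rw [alephW, xiW, Real.exp_sub, mul_pow, ← Real.exp_nat_mul]
  push_cast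
  ring

lemma exp_mul_le_mul_exp_of_le_six_mul_add_one {u : ℝ} (hlam : 1 ≤ lam) (hu : u ≤ 6 * m + 1) :
    Real.exp (lam * u) ≤ lam * Real.exp (6 * lam * (m + 1)) := by
  calc Real.exp (lam * u) ≤ Real.exp (6 * lam * (m + 1)) := Real.exp_le_exp.mpr (by nlinarith)
    _ ≤ lam * Real.exp (6 * lam * (m + 1)) := le_mul_of_one_le_left (Real.exp_pos _).le hlam

variable {t τ : ℝ} {x y : EuclideanSpace ℝ (Fin 2)} {η : ℝ}

lemma phiW_sub_phiW_le (hθ : θ t ≤ θ τ) (hθτ0 : 0 ≤ θ τ) (hθτ2 : θ τ ≤ 2) (hlam : 1 ≤ lam)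
    (hψt : ψ t x ≤ 6 * m + 1) (hψτ : ψ τ y ≤ 6 * m + 1) (hψ : |ψ τ y - ψ t x| ≤ η) :
    phiW θ ψ m lam t x - phiW θ ψ m lam τ y
      ≤ 2 * (lam * Real.exp (lam * (6 * m + 1)) * η) := by
  set L := lam * Real.exp (6 * lam * (m + 1))
  set a := lam * ψ t x
  set b := lam * ψ τ y
  have hdecomp : phiW θ ψ m lam t x - phiW θ ψ m lam τ y
      = (θ τ - θ t) * (Real.exp a - L) + θ τ * (Real.exp b - Real.exp a) := by
    simp only [phiW]; ring
  have htime : (θ τ - θ t) * (Real.exp a - L) ≤ 0 :=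
    mul_nonpos_of_nonneg_of_nonpos (sub_nonneg.mpr hθ)
      (sub_nonpos.mpr (exp_mul_le_mul_exp_of_le_six_mul_add_one hlam hψt))
  have hspace : Real.exp b - Real.exp a ≤ lam * Real.exp (lam * (6 * m + 1)) * η := by
    have hba : |b - a| ≤ lam * η := by
      rw [← mul_sub, abs_mul, abs_of_nonneg (by linarith)]
      exact mul_le_mul_of_nonneg_left hψ (by linarith)
    calc Real.exp b - Real.exp a ≤ Real.exp (lam * (6 * m + 1)) * |b - a| :=
          Real.exp_sub_exp_le_exp_mul_abs_s10 (mul_le_mul_of_nonneg_left hψτ (by linarith))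
      _ ≤ Real.exp (lam * (6 * m + 1)) * (lam * η) :=
          mul_le_mul_of_nonneg_left hba (Real.exp_pos _).le
      _ = lam * Real.exp (lam * (6 * m + 1)) * η := by ring
  have hη : 0 ≤ lam * Real.exp (lam * (6 * m + 1)) * η :=
    mul_nonneg (by positivity) ((abs_nonneg _).trans hψ)
  rw [hdecomp]
  nlinarith

lemma alephW_le_of_abs_sub_le {s : ℝ} (hs : 0 ≤ s) (hm : 0 ≤ m) (hlam : 1 ≤ lam)
    (hθt : 1 ≤ θ t) (hθ : θ t ≤ θ τ) (hθτ2 : θ τ ≤ 2)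
    (hψt : ψ t x ≤ 6 * m + 1) (hψτ : ψ τ y ≤ 6 * m + 1) (hψ : |ψ τ y - ψ t x| ≤ η) :
    alephW θ ψ m lam s t x
      ≤ 4 * Real.exp (2 * (s + 1) * lam * Real.exp (lam * (6 * m + 1)) * η)
        * alephW θ ψ m lam s τ y := by
  set E := Real.exp (lam * (6 * m + 1))
  have hE : 1 ≤ E := Real.one_le_exp (by positivity)
  have hη : 0 ≤ lam * η := mul_nonneg (by linarith) ((abs_nonneg _).trans hψ)
  have hφ := phiW_sub_phiW_le hθ (by linarith) hθτ2 hlam hψt hψτ hψ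
  have hψlin : lam * ψ τ y - lam * ψ t x ≤ lam * η := by
    rw [← mul_sub]
    exact mul_le_mul_of_nonneg_left ((le_abs_self _).trans hψ) (by linarith)
  have hexponent : s * phiW θ ψ m lam t x - 2 * (lam * ψ t x)
      ≤ 2 * (s + 1) * lam * E * η + (s * phiW θ ψ m lam τ y - 2 * (lam * ψ τ y)) := by
    nlinarith [mul_le_mul_of_nonneg_left hφ hs, mul_le_mul_of_nonneg_left hE hη]
  have hprefactor : ((θ t)^2)⁻¹ ≤ 4 * ((θ τ)^2)⁻¹ :=
    calc ((θ t)^2)⁻¹ ≤ (1^2)⁻¹ := inv_anti₀ (by norm_num) (by gcongr)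
      _ = 4 * (2^2)⁻¹ := by norm_num
      _ ≤ 4 * ((θ τ)^2)⁻¹ := by gcongr 4 * ?_; exact inv_anti₀ (by nlinarith) (by gcongr; linarith)
  rw [alephW_eq, alephW_eq]
  calc ((θ t)^2)⁻¹ * Real.exp (s * phiW θ ψ m lam t x - 2 * (lam * ψ t x))
      ≤ (4 * ((θ τ)^2)⁻¹) * (Real.exp (2 * (s + 1) * lam * E * η)
          * Real.exp (s * phiW θ ψ m lam τ y - 2 * (lam * ψ τ y))) := by
        rw [← Real.exp_add]
        exact mul_le_mul hprefactor (Real.exp_le_exp.mpr hexponent) (Real.exp_pos _).le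
          (by positivity)
    _ = _ := by ring

end Weights

theorem stmt_10_general
    (T m lam K : ℝ) (hm : 1 ≤ m) (hlam : 1 ≤ lam) (hK : 0 ≤ K)
    (θ : ℝ → ℝ)
    (ψ : ℝ → EuclideanSpace ℝ (Fin 2) → ℝ)
    (hψub : ∀ t ∈ Set.Icc (0:ℝ) T, ∀ x, ψ t x ≤ 6*m + 1)
    (hψlip : ∀ t ∈ Set.Icc (0:ℝ) T, ∀ x x', |ψ t x - ψ t x'| ≤ K * ‖x - x'‖)
    (Xbar Xhat : ℝ → ℝ → EuclideanSpace ℝ (Fin 2) → EuclideanSpace ℝ (Fin 2))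
    (htransport : ∀ t ∈ Set.Icc (0:ℝ) T, ∀ τ ∈ Set.Icc (0:ℝ) T, ∀ x,
      ψ τ (Xbar τ t x) = ψ t x)
    (T' : ℝ) (hT'T : T' ≤ T)
    (hθanti : AntitoneOn θ (Set.Icc 0 T'))
    (hθ12 : ∀ t ∈ Set.Icc (0:ℝ) T', 1 ≤ θ t ∧ θ t ≤ 2)
    (s : ℝ) (hs : 0 < s)
    (δ : ℝ)
    (τ t : ℝ) (hτ0 : 0 ≤ τ) (hτt : τ ≤ t) (htT' : t ≤ T')
    (x : EuclideanSpace ℝ (Fin 2))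
    (hclose : ‖Xhat τ t x - Xbar τ t x‖ ≤ δ) :
    alephW θ ψ m lam s t x
      ≤ 4 * Real.exp (2 * (s+1) * lam * K * Real.exp (lam*(6*m+1)) * δ)
        * alephW θ ψ m lam s τ (Xhat τ t x) := by
  have hτ : τ ∈ Set.Icc (0:ℝ) T' := ⟨hτ0, hτt.trans htT'⟩
  have ht : t ∈ Set.Icc (0:ℝ) T' := ⟨hτ0.trans hτt, htT'⟩
  have hτT : τ ∈ Set.Icc (0:ℝ) T := ⟨hτ0, hτ.2.trans hT'T⟩
  have htT : t ∈ Set.Icc (0:ℝ) T := ⟨ht.1, htT'.trans hT'T⟩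
  have hψ : |ψ τ (Xhat τ t x) - ψ t x| ≤ K * δ := by
    rw [← htransport t htT τ hτT x]
    exact (hψlip τ hτT _ _).trans (mul_le_mul_of_nonneg_left hclose hK)
  have key := alephW_le_of_abs_sub_le hs.le (by linarith) hlam (hθ12 t ht).1
    (hθanti hτ ht hτt) (hθ12 τ hτ).2 (hψub t htT x) (hψub τ hτT _) hψ
  convert key using 4
  ring

/-- The case `τ ≤ t ≤ T − 2T₁` of Proposition 4.5 of the paper, with explicit constant:
if `θ` is nonincreasing and valued in `[1,2]` on `[0,T']`, then for `0 ≤ τ ≤ t ≤ T'`,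
`ℵ(t,x) ≤ 4 e^{2(s+1) λ K e^{λ(6m+1)} δ} ℵ(τ, X̂(τ,t,x))` whenever
`|X̂(τ,t,x) − X̄(τ,t,x)| ≤ δ`. -/
theorem stmt_10
    (T m lam K : ℝ) (hT : 0 < T) (hm : 1 ≤ m) (hlam : 1 ≤ lam) (hK : 0 ≤ K)
    (θ : ℝ → ℝ) (hθ1 : ∀ t ∈ Set.Icc (0:ℝ) T, 1 ≤ θ t)
    (ψ : ℝ → EuclideanSpace ℝ (Fin 2) → ℝ)
    (hψlb : ∀ t ∈ Set.Icc (0:ℝ) T, ∀ x, 6*m ≤ ψ t x)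
    (hψub : ∀ t ∈ Set.Icc (0:ℝ) T, ∀ x, ψ t x ≤ 6*m + 1)
    (hψlip : ∀ t ∈ Set.Icc (0:ℝ) T, ∀ x x', |ψ t x - ψ t x'| ≤ K * ‖x - x'‖)
    (Xbar Xhat : ℝ → ℝ → EuclideanSpace ℝ (Fin 2) → EuclideanSpace ℝ (Fin 2))
    (htransport : ∀ t ∈ Set.Icc (0:ℝ) T, ∀ τ ∈ Set.Icc (0:ℝ) T, ∀ x,
      ψ τ (Xbar τ t x) = ψ t x)
    (T' : ℝ) (hT'0 : 0 ≤ T') (hT'T : T' ≤ T)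
    (hθanti : AntitoneOn θ (Set.Icc 0 T'))
    (hθ12 : ∀ t ∈ Set.Icc (0:ℝ) T', 1 ≤ θ t ∧ θ t ≤ 2)
    (s : ℝ) (hs : 0 < s)
    (δ : ℝ) (hδ : 0 ≤ δ)
    (τ t : ℝ) (hτ0 : 0 ≤ τ) (hτt : τ ≤ t) (htT' : t ≤ T')
    (x : EuclideanSpace ℝ (Fin 2))
    (hclose : ‖Xhat τ t x - Xbar τ t x‖ ≤ δ) :
    alephW θ ψ m lam s t x
      ≤ 4 * Real.exp (2 * (s+1) * lam * K * Real.exp (lam*(6*m+1)) * δ)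
        * alephW θ ψ m lam s τ (Xhat τ t x) :=
  stmt_10_general T m lam K hm hlam hK θ ψ hψub hψlip Xbar Xhat htransport T' hT'T hθanti hθ12 s hs
    δ τ t hτ0 hτt htT' x hclose
end

section
/- Let ψ : ℝ² → ℝ be twice continuously differentiable, let x ∈ ℝ², and let α > 0, K ≥ 0 be such that |∇ψ(x)| ≥ α and the operator norm of the second derivative D²ψ(x) is at most K. Then for all real s > 0, c > 0 and all λ ≥ 8K/α², for every η ∈ ℝ²: 2sλ²·c·⟨∇ψ(x),η⟩² + sλ²·c·|∇ψ(x)|²·|η|² + 2sλ·c·D²ψ(x)(η,η) − sλ·c·Δψ(x)·|η|² ≥ (sλ²α²/2)·c·|η|². -/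
open RealInnerProductSpace

/-- Second derivative of `f` at `x` as a bilinear form, evaluated at `(η, η')`. -/
noncomputable def D2 (f : EuclideanSpace ℝ (Fin 2) → ℝ) (x η η' : EuclideanSpace ℝ (Fin 2)) : ℝ :=
  iteratedFDeriv ℝ 2 f x ![η, η']

/-- Laplacian of `f` at `x`: the trace of the second derivative. -/
noncomputable def lapl (f : EuclideanSpace ℝ (Fin 2) → ℝ) (x : EuclideanSpace ℝ (Fin 2)) : ℝ :=
  ∑ i : Fin 2, D2 f x (EuclideanSpace.single i 1) (EuclideanSpace.single i 1)

/-!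
After factoring out the nonnegative weight `sλc`, the claim reads
`λα²|η|²/2 ≤ 2λ⟨∇ψ,η⟩² + λ|∇ψ|²|η|² + 2D²ψ(η,η) - Δψ|η|²`.
Drop the first term, bound `|∇ψ|² ≥ α²`, and bound both curvature terms by `‖D²ψ‖ ≤ K`:
`D²ψ(η,η) ≥ -K|η|²` and `Δψ ≤ 2K`. What remains is `λα² - 4K ≥ λα²/2`, i.e. `λ ≥ 8K/α²`.
-/

section SecondDerivativeBounds

variable (f : EuclideanSpace ℝ (Fin 2) → ℝ) (x : EuclideanSpace ℝ (Fin 2))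

theorem abs_D2_le (u v : EuclideanSpace ℝ (Fin 2)) :
    |D2 f x u v| ≤ ‖iteratedFDeriv ℝ 2 f x‖ * (‖u‖ * ‖v‖) := by
  have h := (iteratedFDeriv ℝ 2 f x).le_opNorm ![u, v]
  simpa [D2, Fin.prod_univ_two] using h

theorem neg_norm_mul_sq_le_D2 (η : EuclideanSpace ℝ (Fin 2)) :
    -(‖iteratedFDeriv ℝ 2 f x‖ * ‖η‖ ^ 2) ≤ D2 f x η η := by
  have h := neg_abs_le (D2 f x η η)
  nlinarith [abs_D2_le f x η η]

theorem lapl_le_two_mul_norm : lapl f x ≤ 2 * ‖iteratedFDeriv ℝ 2 f x‖ := by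
  have h (i : Fin 2) : D2 f x (EuclideanSpace.single i 1) (EuclideanSpace.single i 1)
      ≤ ‖iteratedFDeriv ℝ 2 f x‖ := by
    simpa using (le_abs_self _).trans (abs_D2_le f x (EuclideanSpace.single i 1)
      (EuclideanSpace.single i 1))
  rw [lapl, Fin.sum_univ_two]
  linarith [h 0, h 1]

end SecondDerivativeBounds

theorem half_lam_mul_sq_le_of_norm_iteratedFDeriv_le
    (f : EuclideanSpace ℝ (Fin 2) → ℝ) (x η : EuclideanSpace ℝ (Fin 2)) {α lam : ℝ}
    (hα : 0 ≤ α) (hgrad : α ≤ ‖gradient f x‖) (hlam : 0 ≤ lam)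
    (hD2 : 8 * ‖iteratedFDeriv ℝ 2 f x‖ ≤ lam * α ^ 2) :
    lam * α ^ 2 / 2 * ‖η‖ ^ 2
      ≤ 2 * lam * ⟪gradient f x, η⟫ ^ 2 + lam * ‖gradient f x‖ ^ 2 * ‖η‖ ^ 2
        + 2 * D2 f x η η - lapl f x * ‖η‖ ^ 2 := by
  have hg : α ^ 2 ≤ ‖gradient f x‖ ^ 2 := pow_le_pow_left₀ hα hgrad 2
  have hη : 0 ≤ ‖η‖ ^ 2 := sq_nonneg _
  nlinarith [neg_norm_mul_sq_le_D2 f x η, lapl_le_two_mul_norm f x,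
    mul_nonneg (mul_nonneg hlam hη) (sub_nonneg.2 hg),
    mul_nonneg hlam (sq_nonneg ⟪gradient f x, η⟫)]

theorem stmt_12_general
    (ψ : EuclideanSpace ℝ (Fin 2) → ℝ)
    (x : EuclideanSpace ℝ (Fin 2)) (α K : ℝ) (hα : 0 < α)
    (hgrad : α ≤ ‖gradient ψ x‖) (hD2 : ‖iteratedFDeriv ℝ 2 ψ x‖ ≤ K)
    (s c lam : ℝ) (hs : 0 < s) (hc : 0 < c) (hlam : 8*K/α^2 ≤ lam) :
    ∀ η : EuclideanSpace ℝ (Fin 2),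
      (s*lam^2*α^2/2)*c*‖η‖^2
        ≤ 2*s*lam^2*c*(⟪gradient ψ x, η⟫)^2 + s*lam^2*c*‖gradient ψ x‖^2*‖η‖^2
          + 2*s*lam*c*(D2 ψ x η η) - s*lam*c*(lapl ψ x)*‖η‖^2 := by
  intro η
  have hK : 0 ≤ K := (norm_nonneg _).trans hD2
  have hlam0 : 0 ≤ lam := (by positivity : 0 ≤ 8 * K / α ^ 2).trans hlam
  have hlamα : 8 * K ≤ lam * α ^ 2 := (div_le_iff₀ (by positivity)).1 hlam
  have key := half_lam_mul_sq_le_of_norm_iteratedFDeriv_le ψ x η hα.le hgrad hlam0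
    (by linarith)
  linear_combination (s * lam * c) * key

/-- The pointwise lower bound (A.18) in the proof of the Carleman estimate (Theorem A.1),
valid away from the set where `∇ψ` vanishes, with explicit constants. -/
theorem stmt_12
    (ψ : EuclideanSpace ℝ (Fin 2) → ℝ) (hψ : ContDiff ℝ 2 ψ)
    (x : EuclideanSpace ℝ (Fin 2)) (α K : ℝ) (hα : 0 < α) (hK : 0 ≤ K)
    (hgrad : α ≤ ‖gradient ψ x‖) (hD2 : ‖iteratedFDeriv ℝ 2 ψ x‖ ≤ K)
    (s c lam : ℝ) (hs : 0 < s) (hc : 0 < c) (hlam : 8*K/α^2 ≤ lam) :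
    ∀ η : EuclideanSpace ℝ (Fin 2),
      (s*lam^2*α^2/2)*c*‖η‖^2
        ≤ 2*s*lam^2*c*(⟪gradient ψ x, η⟫)^2 + s*lam^2*c*‖gradient ψ x‖^2*‖η‖^2
          + 2*s*lam*c*(D2 ψ x η η) - s*lam*c*(lapl ψ x)*‖η‖^2 :=
  stmt_12_general ψ x α K hα hgrad hD2 s c lam hs hc hlam
end

section
/- Let T₀ > 0, m ≥ 1, s ≥ 1, λ ≥ 1 and P ≥ 0 be real numbers satisfying s·λ²·exp(λ(6m+1)) ≥ 8·T₀·P, and set μ := s·λ²·exp(λ(6m−4)). Then for all real a with 6m ≤ a ≤ 6m+1 and all real b with |b| ≤ P: (μ/T₀)·(λ·exp(6λ(m+1)) − exp(λa)) + 2·λ·b·exp(λa) ≥ (1/(2T₀))·s·λ³·exp(λ(12m+2)). -/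
open Real

/-!
Writing `X = s λ³ e^{λ(12m+2)}` and `μ = s λ² e^{λ(6m−4)}`, the leading term is exactly
`μ λ e^{6λ(m+1)} = X`. Since `e^{λa} ≤ e^{λ(6m+1)}`, the correction `μ e^{λa}` is at most
`λ² e^{−5λ} · X/λ³ ≤ X/4` because `λ e^{5λ} ≥ 4`, and the hypothesis `8 T₀ P ≤ s λ² e^{λ(6m+1)}`
makes `T₀ · 2λ|b| e^{λa} ≤ X/4`. What remains is `X/2`, divided by `T₀`.
-/

lemma four_le_mul_exp_five_mul {lam : ℝ} (hlam : 1 ≤ lam) : 4 ≤ lam * exp (5 * lam) := by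
  have h := add_one_le_exp (5 * lam)
  nlinarith

lemma carleman_leading_term (m s lam : ℝ) :
    s * lam ^ 2 * exp (lam * (6 * m - 4)) * (lam * exp (6 * lam * (m + 1)))
      = s * lam ^ 3 * exp (lam * (12 * m + 2)) := by
  have h : exp (lam * (6 * m - 4)) * exp (6 * lam * (m + 1)) = exp (lam * (12 * m + 2)) := by
    rw [← exp_add]; ring_nf
  linear_combination s * lam ^ 3 * h

lemma carleman_correction_le {m s lam a : ℝ} (hs : 0 ≤ s) (hlam : 1 ≤ lam)
    (ha : a ≤ 6 * m + 1) :
    s * lam ^ 2 * exp (lam * (6 * m - 4)) * exp (lam * a)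
      ≤ 1 / 4 * (s * lam ^ 3 * exp (lam * (12 * m + 2))) := by
  have hexp : exp (lam * a) ≤ exp (lam * (6 * m + 1)) :=
    exp_le_exp.mpr (mul_le_mul_of_nonneg_left ha (by linarith))
  have hsplit : exp (lam * (12 * m + 2))
      = exp (lam * (6 * m - 4)) * exp (lam * (6 * m + 1)) * exp (5 * lam) := by
    rw [← exp_add, ← exp_add]; ring_nf
  have h4 := four_le_mul_exp_five_mul hlam
  have hc : 0 ≤ s * lam ^ 2 * exp (lam * (6 * m - 4)) := by positivity
  calc s * lam ^ 2 * exp (lam * (6 * m - 4)) * exp (lam * a)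
      ≤ s * lam ^ 2 * exp (lam * (6 * m - 4)) * exp (lam * (6 * m + 1)) * 1 := by
        rw [mul_one]; exact mul_le_mul_of_nonneg_left hexp hc
    _ ≤ s * lam ^ 2 * exp (lam * (6 * m - 4)) * exp (lam * (6 * m + 1))
          * (1 / 4 * (lam * exp (5 * lam))) := by
        gcongr; linarith
    _ = 1 / 4 * (s * lam ^ 3 * exp (lam * (12 * m + 2))) := by
        rw [hsplit]; ring

lemma carleman_time_derivative_term_ge {T₀ m s lam P a b : ℝ} (hT₀ : 0 < T₀) (hlam : 0 ≤ lam)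
    (hcond : 8 * T₀ * P ≤ s * lam ^ 2 * exp (lam * (6 * m + 1)))
    (ha : a ≤ 6 * m + 1) (hb : |b| ≤ P) :
    -(1 / 4 * (s * lam ^ 3 * exp (lam * (12 * m + 2)))) ≤ T₀ * (2 * lam * b * exp (lam * a)) := by
  have hexp : exp (lam * a) ≤ exp (lam * (6 * m + 1)) :=
    exp_le_exp.mpr (mul_le_mul_of_nonneg_left ha hlam)
  have hsq : exp (lam * (12 * m + 2)) = exp (lam * (6 * m + 1)) * exp (lam * (6 * m + 1)) := by
    rw [← exp_add]; ring_nf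
  have hP : 0 ≤ P := (abs_nonneg b).trans hb
  calc -(1 / 4 * (s * lam ^ 3 * exp (lam * (12 * m + 2))))
      = -(2 * lam * exp (lam * (6 * m + 1)) / 8 * (s * lam ^ 2 * exp (lam * (6 * m + 1)))) := by
        rw [hsq]; ring
    _ ≤ -(2 * lam * exp (lam * (6 * m + 1)) / 8 * (8 * T₀ * P)) := by gcongr
    _ = -(T₀ * (2 * lam * P * exp (lam * (6 * m + 1)))) := by ring
    _ ≤ -(T₀ * (2 * lam * |b| * exp (lam * a))) := by gcongr
    _ = T₀ * (2 * lam * -|b| * exp (lam * a)) := by ring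
    _ ≤ T₀ * (2 * lam * b * exp (lam * a)) := by gcongr; exact neg_abs_le b

theorem stmt_19_general
    (T₀ m s lam P : ℝ) (hT₀ : 0 < T₀) (hs : 1 ≤ s) (hlam : 1 ≤ lam)
    (hcond : 8 * T₀ * P ≤ s * lam^2 * Real.exp (lam*(6*m+1)))
    (a b : ℝ) (ha2 : a ≤ 6*m + 1) (hb : |b| ≤ P) :
    (1/(2*T₀)) * s * lam^3 * Real.exp (lam*(12*m+2))
      ≤ (s * lam^2 * Real.exp (lam*(6*m-4)) / T₀)
          * (lam * Real.exp (6*lam*(m+1)) - Real.exp (lam*a))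
        + 2 * lam * b * Real.exp (lam*a) := by
  have hlead := carleman_leading_term m s lam
  have hcorr := carleman_correction_le (s := s) (a := a) (by linarith) hlam ha2
  have htime := carleman_time_derivative_term_ge hT₀ (by linarith) hcond ha2 hb
  rw [show (1 / (2 * T₀)) * s * lam ^ 3 * exp (lam * (12 * m + 2))
      = 1 / 2 * (s * lam ^ 3 * exp (lam * (12 * m + 2))) / T₀ by ring,
    div_le_iff₀ hT₀]
  calc 1 / 2 * (s * lam ^ 3 * exp (lam * (12 * m + 2)))
      ≤ s * lam ^ 2 * exp (lam * (6 * m - 4)) * (lam * exp (6 * lam * (m + 1)) - exp (lam * a))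
          + T₀ * (2 * lam * b * exp (lam * a)) := by linarith
    _ = _ := by field_simp

/-- The coefficient positivity at time `t = 0` (estimate (A.14)) in the proof of the
Carleman estimate for the heat equation (Theorem A.1), with `μ = s λ² e^{λ(6m−4)}`,
`a = ψ(0,x) ∈ [6m, 6m+1]` and `|b| = |∂_t ψ(0,x)| ≤ P`. -/
theorem stmt_19
    (T₀ m s lam P : ℝ) (hT₀ : 0 < T₀) (hm : 1 ≤ m) (hs : 1 ≤ s) (hlam : 1 ≤ lam)
    (hP : 0 ≤ P)
    (hcond : 8 * T₀ * P ≤ s * lam^2 * Real.exp (lam*(6*m+1)))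
    (a b : ℝ) (ha1 : 6*m ≤ a) (ha2 : a ≤ 6*m + 1) (hb : |b| ≤ P) :
    (1/(2*T₀)) * s * lam^3 * Real.exp (lam*(12*m+2))
      ≤ (s * lam^2 * Real.exp (lam*(6*m-4)) / T₀)
          * (lam * Real.exp (6*lam*(m+1)) - Real.exp (lam*a))
        + 2 * lam * b * Real.exp (lam*a) :=
  stmt_19_general T₀ m s lam P hT₀ hs hlam hcond a b ha2 hb
end
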